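/- For all ε₁, ε₂ > 0 there is C = C(ε₁,ε₂) such that for all t, s > 0 and x, y ∈ ℝ^N, ∫_{ℝ^N} [1/ω(B(x, t+d(x,z)))]·(t/(t+d(x,z)))^{ε₁} · [1/ω(B(z, s+d(z,y)))]·(s/(s+d(z,y)))^{ε₂} dω(z) ≤ C / ω(B(x, max(t,s) + d(x,y))). -/

import Mathlib

open Metric MeasureTheory
open scoped ENNReal NNReal

noncomputable section

variable {N : ℕ}
  {G : Subgroup ((EuclideanSpace ℝ (Fin N)) ≃ₗᵢ[ℝ] (EuclideanSpace ℝ (Fin N)))}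
  {d : EuclideanSpace ℝ (Fin N) → EuclideanSpace ℝ (Fin N) → ℝ}
  {ω : Measure (EuclideanSpace ℝ (Fin N))} {NN Cd : ℝ}

lemma d_bdd (x y : EuclideanSpace ℝ (Fin N)) :
    BddBelow (Set.range fun σ : G => ‖x - σ.1 y‖) :=
  ⟨0, by rintro _ ⟨σ, rfl⟩; positivity⟩

lemma d_le (hd : ∀ x y, d x y = ⨅ σ : G, ‖x - σ.1 y‖) (x y : EuclideanSpace ℝ (Fin N))
    (σ : G) : d x y ≤ ‖x - σ.1 y‖ := by
  rw [hd]; exact ciInf_le (d_bdd x y) σ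

lemma d_nonneg (hd : ∀ x y, d x y = ⨅ σ : G, ‖x - σ.1 y‖) (x y : EuclideanSpace ℝ (Fin N)) :
    0 ≤ d x y := by
  rw [hd]; exact Real.iInf_nonneg fun σ => norm_nonneg _

lemma d_lt (hd : ∀ x y, d x y = ⨅ σ : G, ‖x - σ.1 y‖) {x y : EuclideanSpace ℝ (Fin N)}
    {r : ℝ} (h : d x y < r) : ∃ σ : G, ‖x - σ.1 y‖ < r := by
  rw [hd] at h; exact exists_lt_of_ciInf_lt h

lemma d_tri (hd : ∀ x y, d x y = ⨅ σ : G, ‖x - σ.1 y‖) (x y z : EuclideanSpace ℝ (Fin N)) :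
    d x z ≤ d x y + d y z := by
  have key : ∀ (σ τ : G), d x z ≤ ‖x - σ.1 y‖ + ‖y - τ.1 z‖ := by
    intro σ τ
    have h1 : d x z ≤ ‖x - (σ * τ).1 z‖ := d_le hd x z (σ * τ)
    have h2 : (σ * τ).1 z = σ.1 (τ.1 z) := rfl
    calc d x z ≤ ‖x - σ.1 (τ.1 z)‖ := by rwa [h2] at h1
      _ = ‖(x - σ.1 y) + (σ.1 y - σ.1 (τ.1 z))‖ := by rw [sub_add_sub_cancel]
      _ ≤ ‖x - σ.1 y‖ + ‖σ.1 y - σ.1 (τ.1 z)‖ := norm_add_le _ _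
      _ = ‖x - σ.1 y‖ + ‖y - τ.1 z‖ := by
          rw [← map_sub σ.1, σ.1.norm_map]
  have step : ∀ σ : G, d x z - ‖x - σ.1 y‖ ≤ d y z := by
    intro σ
    rw [hd y z]
    exact le_ciInf fun τ => by linarith [key σ τ]
  have : d x z - d y z ≤ d x y := by
    rw [hd x y]
    exact le_ciInf fun σ => by linarith [step σ]
  linarith

lemma d_symm (hd : ∀ x y, d x y = ⨅ σ : G, ‖x - σ.1 y‖) (x y : EuclideanSpace ℝ (Fin N)) :
    d x y = d y x := by
  have key : ∀ u v : EuclideanSpace ℝ (Fin N), d u v ≤ d v u := by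
    intro u v
    rw [hd v u]
    refine le_ciInf fun τ => ?_
    have h1 : d u v ≤ ‖u - (τ⁻¹ : G).1 v‖ := d_le hd u v (τ⁻¹ : G)
    have h2 : ‖u - (τ⁻¹ : G).1 v‖ = ‖v - τ.1 u‖ := by
      have h3 : (τ.1) (u - (τ⁻¹ : G).1 v) = τ.1 u - v := by
        rw [map_sub]
        congr 1
        exact τ.1.apply_symm_apply v
      rw [← τ.1.norm_map (u - (τ⁻¹ : G).1 v), h3, norm_sub_rev]
    linarith
  exact le_antisymm (key x y) (key y x)

lemma mfin (hpos : ∀ (x : EuclideanSpace ℝ (Fin N)) (r : ℝ), 0 < r → 0 < (ω (ball x r)).toReal)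
    (x : EuclideanSpace ℝ (Fin N)) {r : ℝ} (hr : 0 < r) : ω (ball x r) ≠ ⊤ := by
  intro h
  have := hpos x r hr
  rw [h] at this
  simp at this

lemma vmono (hpos : ∀ (x : EuclideanSpace ℝ (Fin N)) (r : ℝ), 0 < r → 0 < (ω (ball x r)).toReal)
    (x : EuclideanSpace ℝ (Fin N)) {r r' : ℝ} (hr : 0 < r) (hrr : r ≤ r') :
    (ω (ball x r)).toReal ≤ (ω (ball x r')).toReal :=
  ENNReal.toReal_mono (mfin hpos x (hr.trans_le hrr)) (measure_mono (ball_subset_ball hrr))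

lemma vdoub
    (hdoub : ∀ (x : EuclideanSpace ℝ (Fin N)) (r l : ℝ), 0 < r → 1 ≤ l →
      Cd⁻¹ * l ^ (N : ℝ) * (ω (ball x r)).toReal ≤ (ω (ball x (l * r))).toReal ∧
      (ω (ball x (l * r))).toReal ≤ Cd * l ^ NN * (ω (ball x r)).toReal)
    (x : EuclideanSpace ℝ (Fin N)) {r r' : ℝ} (hr : 0 < r) (hrr : r ≤ r') :
    (ω (ball x r')).toReal ≤ Cd * (r' / r) ^ NN * (ω (ball x r)).toReal := by
  have hl : 1 ≤ r' / r := (one_le_div hr).mpr hrr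
  have := (hdoub x r (r' / r) hr hl).2
  rwa [div_mul_cancel₀ _ hr.ne'] at this

lemma vcenter (hd : ∀ x y, d x y = ⨅ σ : G, ‖x - σ.1 y‖)
    (hdoub : ∀ (x : EuclideanSpace ℝ (Fin N)) (r l : ℝ), 0 < r → 1 ≤ l →
      Cd⁻¹ * l ^ (N : ℝ) * (ω (ball x r)).toReal ≤ (ω (ball x (l * r))).toReal ∧
      (ω (ball x (l * r))).toReal ≤ Cd * l ^ NN * (ω (ball x r)).toReal)
    (hpos : ∀ (x : EuclideanSpace ℝ (Fin N)) (r : ℝ), 0 < r → 0 < (ω (ball x r)).toReal)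
    (hinv : ∀ σ : G, ∀ (x : EuclideanSpace ℝ (Fin N)) (r : ℝ),
      ω (ball (σ.1 x) r) = ω (ball x r))
    (x z : EuclideanSpace ℝ (Fin N)) {r : ℝ} (hr : 0 < r) (hdist : d x z ≤ r) :
    (ω (ball x r)).toReal ≤ Cd * 3 ^ NN * (ω (ball z r)).toReal := by
  obtain ⟨σ, hσ⟩ := d_lt hd (show d x z < 2 * r by linarith)
  have hsub : ball x r ⊆ ball (σ.1 z) (3 * r) := by
    intro w hw
    rw [mem_ball] at hw ⊢
    have : dist w (σ.1 z) ≤ dist w x + dist x (σ.1 z) := dist_triangle _ _ _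
    have hdx : dist x (σ.1 z) = ‖x - σ.1 z‖ := by rw [dist_eq_norm]
    linarith
  have h1 : (ω (ball x r)).toReal ≤ (ω (ball (σ.1 z) (3 * r))).toReal :=
    ENNReal.toReal_mono (by rw [hinv σ z (3*r)]; exact mfin hpos z (by linarith))
      (measure_mono hsub)
  have h2 : (ω (ball (σ.1 z) (3 * r))).toReal = (ω (ball z (3 * r))).toReal := by
    rw [hinv σ z (3*r)]
  have h3 : (ω (ball z (3 * r))).toReal ≤ Cd * (3 : ℝ) ^ NN * (ω (ball z r)).toReal := by
    have := vdoub hdoub z hr (show r ≤ 3 * r by linarith)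
    have h4 : (3 * r) / r = 3 := by field_simp
    rwa [h4] at this
  linarith
lemma d_le_norm (hd : ∀ x y, d x y = ⨅ σ : G, ‖x - σ.1 y‖) (x y : EuclideanSpace ℝ (Fin N)) :
    d x y ≤ ‖x - y‖ := by
  have := d_le hd x y 1
  simpa using this

lemma d_lip (hd : ∀ x y, d x y = ⨅ σ : G, ‖x - σ.1 y‖) (x : EuclideanSpace ℝ (Fin N)) :
    Continuous fun z => d x z := by
  apply (LipschitzWith.of_dist_le_mul (K := 1) (f := fun z => d x z) ?_).continuous
  intro z z'
  rw [Real.dist_eq, NNReal.coe_one, one_mul, abs_sub_le_iff]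
  constructor
  · have h1 : d x z ≤ d x z' + d z' z := d_tri hd x z' z
    have h2 : d z' z ≤ ‖z' - z‖ := d_le_norm hd z' z
    have h3 : dist z z' = ‖z' - z‖ := by rw [dist_comm, dist_eq_norm]
    linarith
  · have h1 : d x z' ≤ d x z + d z z' := d_tri hd x z z'
    have h2 : d z z' ≤ ‖z - z'‖ := d_le_norm hd z z'
    have h3 : dist z z' = ‖z - z'‖ := dist_eq_norm z z'
    linarith

lemma meas_fixed (hd : ∀ x y, d x y = ⨅ σ : G, ‖x - σ.1 y‖)
    (x : EuclideanSpace ℝ (Fin N)) (t : ℝ) :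
    Measurable fun z => (ω (ball x (t + d x z))).toReal := by
  have h1 : Monotone fun r : ℝ => ω (ball x r) :=
    fun r r' h => measure_mono (ball_subset_ball h)
  have h2 : Continuous fun z : EuclideanSpace ℝ (Fin N) => t + d x z :=
    continuous_const.add (d_lip hd x)
  exact ENNReal.measurable_toReal.comp (h1.measurable.comp h2.measurable)

lemma lsc_var (hd : ∀ x y, d x y = ⨅ σ : G, ‖x - σ.1 y‖)
    (y : EuclideanSpace ℝ (Fin N)) {s : ℝ} (hs : 0 < s) :
    LowerSemicontinuous fun z => ω (ball z (s + d z y)) := by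
  intro z c hc
  obtain ⟨r, hrdef⟩ : ∃ r, r = s + d z y := ⟨_, rfl⟩
  replace hc : c < ω (ball z r) := by rw [hrdef]; exact hc
  have hr : 0 < r := by rw [hrdef]; have := d_nonneg hd z y; positivity
  -- find a smaller radius capturing most measure
  have hcup : ball z r = ⋃ n : ℕ, ball z (r - r / (n + 2)) := by
    ext w
    simp only [mem_ball, Set.mem_iUnion]
    constructor
    · intro hw
      obtain ⟨n, hn⟩ := exists_nat_gt (r / (r - dist w z))
      refine ⟨n, ?_⟩
      have hpos' : 0 < r - dist w z := by linarith
      have h2 : r / (n + 2) < r - dist w z := by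
        rw [div_lt_iff₀ (by positivity)]
        have : r / (r - dist w z) < n + 2 := by push_cast; linarith
        rw [div_lt_iff₀ hpos'] at this
        linarith
      linarith
    · rintro ⟨n, hn⟩
      have : 0 < r / (n + 2) := by positivity
      linarith
  have hmono : Monotone fun n : ℕ => ball z (r - r / (n + 2)) := by
    intro n m hnm
    apply ball_subset_ball
    have h2 : r / (m + 2) ≤ r / (n + 2) := by
      apply div_le_div_of_nonneg_left hr.le (by positivity)
      have : (n:ℝ) ≤ m := Nat.cast_le.mpr hnm
      linarith
    linarith
  have hsup : ω (ball z r) = ⨆ n : ℕ, ω (ball z (r - r / (n + 2))) := by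
    rw [hcup]
    exact (hmono.directed_le).measure_iUnion
  rw [hsup] at hc
  obtain ⟨n, hn⟩ := lt_iSup_iff.mp hc
  obtain ⟨r', hr', hn⟩ : ∃ r', r' < r ∧ c < ω (ball z r') := by
    refine ⟨r - r / (n + 2), ?_, hn⟩
    have : 0 < r / ((n:ℝ) + 2) := by positivity
    linarith
  obtain ⟨δ, hδdef⟩ : ∃ δ, δ = (r - r') / 2 := ⟨_, rfl⟩
  have hδ : 0 < δ := by rw [hδdef]; linarith
  filter_upwards [Metric.ball_mem_nhds z hδ] with z' hz'
  rw [mem_ball] at hz'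
  have hdzz : d z z' ≤ dist z' z := by
    rw [dist_comm, dist_eq_norm]; exact d_le_norm hd z z'
  have hrad : r' + δ < s + d z' y := by
    have h1 : d z y ≤ d z z' + d z' y := d_tri hd z z' y
    have : r - δ ≤ s + d z' y := by
      rw [hrdef] at *
      linarith
    have hrr : r = r' + 2 * δ := by rw [hδdef]; ring
    linarith
  have hsub : ball z r' ⊆ ball z' (s + d z' y) := by
    intro w hw
    rw [mem_ball] at hw ⊢
    have := dist_triangle w z z'
    have : dist w z' ≤ dist w z + dist z z' := dist_triangle w z z'
    rw [dist_comm z z'] at this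
    linarith
  exact hn.trans_le (measure_mono hsub)

lemma meas_var (hd : ∀ x y, d x y = ⨅ σ : G, ‖x - σ.1 y‖)
    (y : EuclideanSpace ℝ (Fin N)) {s : ℝ} (hs : 0 < s) :
    Measurable fun z => (ω (ball z (s + d z y))).toReal :=
  ENNReal.measurable_toReal.comp (lsc_var hd y hs).measurable
lemma annuli_cover (hd : ∀ x y, d x y = ⨅ σ : G, ‖x - σ.1 y‖)
    (x : EuclideanSpace ℝ (Fin N)) {t : ℝ} (ht : 0 < t) (z : EuclideanSpace ℝ (Fin N)) :
    ∃ j : ℕ, d x z ∈ Set.Ico ((2:ℝ)^j * t / 2 - t) ((2:ℝ)^j * t) := by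
  have hex : ∃ j : ℕ, d x z < 2^j * t := by
    obtain ⟨m, hm⟩ := pow_unbounded_of_one_lt (d x z / t) (y := (2:ℝ)) one_lt_two
    exact ⟨m, by rw [div_lt_iff₀ ht] at hm; linarith [hm]⟩
  classical
  obtain ⟨j, hj, hmin⟩ := Nat.findX hex
  refine ⟨j, ?_, hj⟩
  match j, hmin with
  | 0, _ =>
    have := d_nonneg hd x z
    simp only [pow_zero, one_mul]
    linarith
  | (k+1), hmin =>
    have hk : ¬ (d x z < 2^k * t) := hmin k (Nat.lt_succ_self k)
    push_neg at hk
    have h2 : (2:ℝ)^(k+1) * t / 2 = 2^k * t := by ring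
    rw [h2]
    linarith

lemma union_balls (hd : ∀ x y, d x y = ⨅ σ : G, ‖x - σ.1 y‖)
    (x : EuclideanSpace ℝ (Fin N)) (R : ℝ) :
    {z | d x z < R} ⊆ ⋃ σ : G, ball ((σ⁻¹ : G).1 x) R := by
  intro z hz
  obtain ⟨σ, hσ⟩ := d_lt hd hz
  refine Set.mem_iUnion.mpr ⟨σ, ?_⟩
  rw [mem_ball, dist_eq_norm]
  have h1 : σ.1 (z - (σ⁻¹ : G).1 x) = σ.1 z - x := by
    rw [map_sub]; congr 1; exact σ.1.apply_symm_apply x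
  calc ‖z - (σ⁻¹ : G).1 x‖ = ‖σ.1 z - x‖ := by rw [← σ.1.norm_map (z - (σ⁻¹:G).1 x), h1]
    _ = ‖x - σ.1 z‖ := norm_sub_rev _ _
    _ < R := hσ

lemma measure_dball [Finite G] (hd : ∀ x y, d x y = ⨅ σ : G, ‖x - σ.1 y‖)
    (hinv : ∀ σ : G, ∀ (x : EuclideanSpace ℝ (Fin N)) (r : ℝ),
      ω (ball (σ.1 x) r) = ω (ball x r))
    (x : EuclideanSpace ℝ (Fin N)) (R : ℝ) :
    ω {z | d x z < R} ≤ (Nat.card G : ℝ≥0∞) * ω (ball x R) := by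
  have : Fintype G := Fintype.ofFinite G
  have hcount : Countable G := inferInstance
  calc ω {z | d x z < R} ≤ ω (⋃ σ : G, ball ((σ⁻¹ : G).1 x) R) :=
        measure_mono (union_balls hd x R)
    _ ≤ ∑' σ : G, ω (ball ((σ⁻¹ : G).1 x) R) := measure_iUnion_le _
    _ = ∑' _ : G, ω (ball x R) := by
        congr 1; funext σ; exact hinv (σ⁻¹ : G) x R
    _ = (Nat.card G : ℝ≥0∞) * ω (ball x R) := by
        rw [tsum_fintype]
        simp [Finset.sum_const, Nat.card_eq_fintype_card, nsmul_eq_mul]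
lemma kernel_nonneg {a b : ℝ} (ha : 0 ≤ a) (hb : 0 ≤ b) (ε : ℝ) : 0 ≤ a⁻¹ * b ^ ε := by positivity

lemma Lone [Finite G] (hd : ∀ x y, d x y = ⨅ σ : G, ‖x - σ.1 y‖)
    (hdoub : ∀ (x : EuclideanSpace ℝ (Fin N)) (r l : ℝ), 0 < r → 1 ≤ l →
      Cd⁻¹ * l ^ (N : ℝ) * (ω (ball x r)).toReal ≤ (ω (ball x (l * r))).toReal ∧
      (ω (ball x (l * r))).toReal ≤ Cd * l ^ NN * (ω (ball x r)).toReal)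
    (hpos : ∀ (x : EuclideanSpace ℝ (Fin N)) (r : ℝ), 0 < r → 0 < (ω (ball x r)).toReal)
    (hinv : ∀ σ : G, ∀ (x : EuclideanSpace ℝ (Fin N)) (r : ℝ),
      ω (ball (σ.1 x) r) = ω (ball x r))
    (hCd : 1 ≤ Cd) {ε : ℝ} (hε : 0 < ε) :
    ∃ A : ℝ, 0 ≤ A ∧ ∀ (x : EuclideanSpace ℝ (Fin N)) (t : ℝ), 0 < t →
      ∫⁻ z, ENNReal.ofReal (((ω (ball x (t + d x z))).toReal)⁻¹ * (t / (t + d x z)) ^ ε) ∂ω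
        ≤ ENNReal.ofReal A := by
  set q : ℝ := (2:ℝ) ^ (-ε) with hqdef
  have hq0 : 0 < q := Real.rpow_pos_of_pos two_pos _
  have hq1 : q < 1 := Real.rpow_lt_one_of_one_lt_of_neg one_lt_two (by linarith)
  set K : ℝ := (Nat.card G : ℝ) * Cd * (2:ℝ) ^ NN * (2:ℝ) ^ ε with hKdef
  have h2NN : (0:ℝ) < (2:ℝ) ^ NN := Real.rpow_pos_of_pos two_pos _
  have h2e : (0:ℝ) < (2:ℝ) ^ ε := Real.rpow_pos_of_pos two_pos _
  have hK : 0 ≤ K := by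
    have : (0:ℝ) ≤ (Nat.card G : ℝ) := Nat.cast_nonneg _
    positivity
  have h1q : (0:ℝ) < 1 - q := by linarith
  refine ⟨K * (1 - q)⁻¹, mul_nonneg hK (by positivity), ?_⟩
  intro x t ht
  -- the annuli
  set S : ℕ → Set (EuclideanSpace ℝ (Fin N)) :=
    fun j => (fun z => d x z) ⁻¹' Set.Ico ((2:ℝ)^j * t / 2 - t) ((2:ℝ)^j * t) with hSdef
  have hSmeas : ∀ j, MeasurableSet (S j) := fun j =>
    (measurableSet_Ico).preimage (d_lip hd x).measurable
  have hcover : (Set.univ : Set (EuclideanSpace ℝ (Fin N))) ⊆ ⋃ j, S j := by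
    intro z _
    obtain ⟨j, hj⟩ := annuli_cover hd x ht z
    exact Set.mem_iUnion.mpr ⟨j, hj⟩
  -- per-annulus bound
  have hann : ∀ j : ℕ,
      (∫⁻ z in S j, ENNReal.ofReal (((ω (ball x (t + d x z))).toReal)⁻¹ * (t / (t + d x z)) ^ ε) ∂ω)
        ≤ ENNReal.ofReal (K * q ^ j) := by
    intro j
    have h2j : (0:ℝ) < 2^j := by positivity
    have hrad : (0:ℝ) < 2^j * t / 2 := by positivity
    -- pointwise bound on the annulus
    have hpt : ∀ z ∈ S j,
        ENNReal.ofReal (((ω (ball x (t + d x z))).toReal)⁻¹ * (t / (t + d x z)) ^ ε)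
          ≤ ENNReal.ofReal (((ω (ball x (2^j * t / 2))).toReal)⁻¹ * ((2:ℝ)^ε * q^j)) := by
      intro z hz
      obtain ⟨hlo, hhi⟩ : (2:ℝ)^j * t / 2 - t ≤ d x z ∧ d x z < 2^j * t := hz
      have hdz : 0 ≤ d x z := d_nonneg hd x z
      have htd : (2:ℝ)^j * t / 2 ≤ t + d x z := by linarith
      apply ENNReal.ofReal_le_ofReal
      have hv : (ω (ball x (2^j * t / 2))).toReal ≤ (ω (ball x (t + d x z))).toReal :=
        vmono hpos x hrad htd
      have hvpos : 0 < (ω (ball x (2^j * t / 2))).toReal := hpos x _ hrad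
      have hinvle : ((ω (ball x (t + d x z))).toReal)⁻¹ ≤ ((ω (ball x (2^j * t / 2))).toReal)⁻¹ :=
        inv_anti₀ hvpos hv
      have hratio : t / (t + d x z) ≤ 2 / 2^j := by
        rw [div_le_div_iff₀ (by linarith) h2j]
        nlinarith
      have hrpow : (t / (t + d x z)) ^ ε ≤ (2 / 2^j : ℝ) ^ ε := by
        apply Real.rpow_le_rpow (by positivity) hratio hε.le
      have hq : ((2:ℝ) / 2^j) ^ ε = (2:ℝ)^ε * q^j := by
        have hqj : q ^ j = (2:ℝ) ^ (-(ε * (j:ℝ))) := by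
          rw [hqdef, ← Real.rpow_natCast ((2:ℝ)^(-ε)) j,
            ← Real.rpow_mul (by norm_num : (0:ℝ) ≤ 2), neg_mul]
        rw [Real.div_rpow (by norm_num) h2j.le, hqj, ← Real.rpow_natCast (2:ℝ) j,
          ← Real.rpow_mul (by norm_num : (0:ℝ) ≤ 2), mul_comm (j:ℝ) ε,
          Real.rpow_neg (by norm_num : (0:ℝ) ≤ 2), div_eq_mul_inv]
      have hker : (t / (t + d x z)) ^ ε ≤ (2:ℝ)^ε * q^j := hq ▸ hrpow
      have h1 : 0 ≤ (t / (t + d x z)) ^ ε := by positivity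
      have h2 : (0:ℝ) ≤ ((ω (ball x (2^j * t / 2))).toReal)⁻¹ := by positivity
      calc ((ω (ball x (t + d x z))).toReal)⁻¹ * (t / (t + d x z)) ^ ε
          ≤ ((ω (ball x (2^j * t / 2))).toReal)⁻¹ * (t / (t + d x z)) ^ ε := by
            apply mul_le_mul_of_nonneg_right hinvle h1
        _ ≤ ((ω (ball x (2^j * t / 2))).toReal)⁻¹ * ((2:ℝ)^ε * q^j) :=
            mul_le_mul_of_nonneg_left hker h2
    have hmeasS : ω (S j) ≤ ENNReal.ofReal ((Nat.card G : ℝ) * (ω (ball x (2^j * t))).toReal) := by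
      have hsub : S j ⊆ {z | d x z < 2^j * t} := fun z hz => hz.2
      calc ω (S j) ≤ ω {z | d x z < 2^j * t} := measure_mono hsub
        _ ≤ (Nat.card G : ℝ≥0∞) * ω (ball x (2^j * t)) := measure_dball hd hinv x _
        _ = ENNReal.ofReal ((Nat.card G : ℝ) * (ω (ball x (2^j * t))).toReal) := by
            rw [ENNReal.ofReal_mul (Nat.cast_nonneg _), ENNReal.ofReal_natCast,
              ENNReal.ofReal_toReal (mfin hpos x (by positivity))]
    calc ∫⁻ z in S j, ENNReal.ofReal (((ω (ball x (t + d x z))).toReal)⁻¹ * (t / (t + d x z)) ^ ε) ∂ω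
        ≤ ∫⁻ _ in S j, ENNReal.ofReal (((ω (ball x (2^j * t / 2))).toReal)⁻¹ * ((2:ℝ)^ε * q^j)) ∂ω :=
          setLIntegral_mono' (hSmeas j) hpt
      _ = ENNReal.ofReal (((ω (ball x (2^j * t / 2))).toReal)⁻¹ * ((2:ℝ)^ε * q^j)) * ω (S j) :=
          setLIntegral_const _ _
      _ ≤ ENNReal.ofReal (((ω (ball x (2^j * t / 2))).toReal)⁻¹ * ((2:ℝ)^ε * q^j)) *
            ENNReal.ofReal ((Nat.card G : ℝ) * (ω (ball x (2^j * t))).toReal) := by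
          exact mul_le_mul_right hmeasS _
      _ = ENNReal.ofReal ((((ω (ball x (2^j * t / 2))).toReal)⁻¹ * ((2:ℝ)^ε * q^j)) *
            ((Nat.card G : ℝ) * (ω (ball x (2^j * t))).toReal)) := by
          rw [← ENNReal.ofReal_mul (by positivity)]
      _ ≤ ENNReal.ofReal (K * q ^ j) := by
          apply ENNReal.ofReal_le_ofReal
          have hvpos : 0 < (ω (ball x (2^j * t / 2))).toReal := hpos x _ hrad
          have hdoubj : (ω (ball x (2^j * t))).toReal ≤
              Cd * 2 ^ NN * (ω (ball x (2^j * t / 2))).toReal := by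
            have := vdoub hdoub x hrad (show 2^j * t / 2 ≤ 2^j * t by linarith)
            have h4 : (2^j * t) / (2^j * t / 2) = (2:ℝ) := by
              rw [div_div_eq_mul_div, mul_comm ((2:ℝ)^j * t) 2,
                mul_div_assoc, div_self (by positivity : (2:ℝ)^j * t ≠ 0), mul_one]
            rwa [h4] at this
          have hcard : (0:ℝ) ≤ (Nat.card G : ℝ) := Nat.cast_nonneg _
          have expand : (((ω (ball x (2^j * t / 2))).toReal)⁻¹ * ((2:ℝ)^ε * q^j)) *
              ((Nat.card G : ℝ) * (ω (ball x (2^j * t))).toReal) ≤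
              (((ω (ball x (2^j * t / 2))).toReal)⁻¹ * ((2:ℝ)^ε * q^j)) *
              ((Nat.card G : ℝ) * (Cd * 2 ^ NN * (ω (ball x (2^j * t / 2))).toReal)) := by
            have hq0j : (0:ℝ) ≤ q ^ j := by positivity
            apply mul_le_mul_of_nonneg_left _ (by positivity)
            apply mul_le_mul_of_nonneg_left hdoubj hcard
          refine expand.trans (le_of_eq ?_)
          rw [hKdef]
          field_simp
  calc ∫⁻ z, ENNReal.ofReal (((ω (ball x (t + d x z))).toReal)⁻¹ * (t / (t + d x z)) ^ ε) ∂ω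
      = ∫⁻ z in Set.univ, ENNReal.ofReal (((ω (ball x (t + d x z))).toReal)⁻¹ * (t / (t + d x z)) ^ ε) ∂ω := by
        rw [Measure.restrict_univ]
    _ ≤ ∫⁻ z in ⋃ j, S j, ENNReal.ofReal (((ω (ball x (t + d x z))).toReal)⁻¹ * (t / (t + d x z)) ^ ε) ∂ω :=
        lintegral_mono_set hcover
    _ ≤ ∑' j, ∫⁻ z in S j, ENNReal.ofReal (((ω (ball x (t + d x z))).toReal)⁻¹ * (t / (t + d x z)) ^ ε) ∂ω :=
        lintegral_iUnion_le _ _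
    _ ≤ ∑' j, ENNReal.ofReal (K * q ^ j) := ENNReal.tsum_le_tsum hann
    _ = ENNReal.ofReal (∑' j : ℕ, K * q ^ j) :=
        (ENNReal.ofReal_tsum_of_nonneg (fun j => by positivity)
          ((summable_geometric_of_lt_one hq0.le hq1).mul_left K)).symm
    _ = ENNReal.ofReal (K * (1 - q)⁻¹) := by
        rw [tsum_mul_left, tsum_geometric_of_lt_one hq0.le hq1]
lemma Ltwo [Finite G] (hd : ∀ x y, d x y = ⨅ σ : G, ‖x - σ.1 y‖)
    (hdoub : ∀ (x : EuclideanSpace ℝ (Fin N)) (r l : ℝ), 0 < r → 1 ≤ l →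
      Cd⁻¹ * l ^ (N : ℝ) * (ω (ball x r)).toReal ≤ (ω (ball x (l * r))).toReal ∧
      (ω (ball x (l * r))).toReal ≤ Cd * l ^ NN * (ω (ball x r)).toReal)
    (hpos : ∀ (x : EuclideanSpace ℝ (Fin N)) (r : ℝ), 0 < r → 0 < (ω (ball x r)).toReal)
    (hinv : ∀ σ : G, ∀ (x : EuclideanSpace ℝ (Fin N)) (r : ℝ),
      ω (ball (σ.1 x) r) = ω (ball x r))
    (hCd : 1 ≤ Cd) {ε : ℝ} (hε : 0 < ε) :
    ∃ A : ℝ, 0 ≤ A ∧ ∀ (y : EuclideanSpace ℝ (Fin N)) (s : ℝ), 0 < s →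
      (∫⁻ z, ENNReal.ofReal (((ω (ball z (s + d z y))).toReal)⁻¹ * (s / (s + d z y)) ^ ε) ∂ω)
        ≤ ENNReal.ofReal A := by
  obtain ⟨A, hA, hL⟩ := Lone hd hdoub hpos hinv hCd hε
  have h3NN : (0:ℝ) < (3:ℝ) ^ NN := Real.rpow_pos_of_pos (by norm_num) _
  set c : ℝ := Cd * 3 ^ NN with hcdef
  have hc : 0 < c := by positivity
  refine ⟨c * A, by positivity, ?_⟩
  intro y s hs
  have hpt : ∀ z, ENNReal.ofReal (((ω (ball z (s + d z y))).toReal)⁻¹ * (s / (s + d z y)) ^ ε)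
      ≤ ENNReal.ofReal c *
        ENNReal.ofReal (((ω (ball y (s + d y z))).toReal)⁻¹ * (s / (s + d y z)) ^ ε) := by
    intro z
    have hsymm : d z y = d y z := d_symm hd z y
    rw [← ENNReal.ofReal_mul hc.le, hsymm]
    apply ENNReal.ofReal_le_ofReal
    have hdz : 0 ≤ d y z := d_nonneg hd y z
    have hr : 0 < s + d y z := by linarith
    have hvz : 0 < (ω (ball z (s + d y z))).toReal := hpos z _ hr
    have hvy : 0 < (ω (ball y (s + d y z))).toReal := hpos y _ hr
    have hcent : (ω (ball y (s + d y z))).toReal ≤ c * (ω (ball z (s + d y z))).toReal := by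
      rw [hcdef]
      exact vcenter hd hdoub hpos hinv y z hr (by linarith [d_nonneg hd y z])
    have key : ((ω (ball z (s + d y z))).toReal)⁻¹ ≤ c * ((ω (ball y (s + d y z))).toReal)⁻¹ := by
      have h1 : (1:ℝ) / (ω (ball z (s + d y z))).toReal ≤ c / (ω (ball y (s + d y z))).toReal := by
        rw [div_le_div_iff₀ hvz hvy]
        linarith
      simpa [one_div, div_eq_mul_inv] using h1
    have hp : (0:ℝ) ≤ (s / (s + d y z)) ^ ε := by positivity
    calc ((ω (ball z (s + d y z))).toReal)⁻¹ * (s / (s + d y z)) ^ ε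
        ≤ (c * ((ω (ball y (s + d y z))).toReal)⁻¹) * (s / (s + d y z)) ^ ε :=
          mul_le_mul_of_nonneg_right key hp
      _ = c * (((ω (ball y (s + d y z))).toReal)⁻¹ * (s / (s + d y z)) ^ ε) := by ring
  calc (∫⁻ z, ENNReal.ofReal (((ω (ball z (s + d z y))).toReal)⁻¹ * (s / (s + d z y)) ^ ε) ∂ω)
      ≤ ∫⁻ z, ENNReal.ofReal c *
          ENNReal.ofReal (((ω (ball y (s + d y z))).toReal)⁻¹ * (s / (s + d y z)) ^ ε) ∂ω :=
        lintegral_mono hpt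
    _ = ENNReal.ofReal c *
        ∫⁻ z, ENNReal.ofReal (((ω (ball y (s + d y z))).toReal)⁻¹ * (s / (s + d y z)) ^ ε) ∂ω :=
        lintegral_const_mul' _ _ ENNReal.ofReal_ne_top
    _ ≤ ENNReal.ofReal c * ENNReal.ofReal A := mul_le_mul_right (hL y s hs) _
    _ = ENNReal.ofReal (c * A) := (ENNReal.ofReal_mul hc.le).symm

end

noncomputable section

open Metric MeasureTheory

/-- Composition estimate: for all `ε₁, ε₂ > 0` there is `C = C(ε₁,ε₂)` such that for
all `t, s > 0` and `x, y`,
`∫ [ω(B(x,t+d(x,z)))⁻¹ (t/(t+d(x,z)))^{ε₁}] [ω(B(z,s+d(z,y)))⁻¹ (s/(s+d(z,y)))^{ε₂}] dω(z)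
  ≤ C / ω(B(x, max(t,s) + d(x,y)))`. -/
theorem stmt_4 {N : ℕ} (ω : Measure (EuclideanSpace ℝ (Fin N)))
    (G : Subgroup ((EuclideanSpace ℝ (Fin N)) ≃ₗᵢ[ℝ] (EuclideanSpace ℝ (Fin N))))
    [Finite G]
    (d : EuclideanSpace ℝ (Fin N) → EuclideanSpace ℝ (Fin N) → ℝ)
    (hd : ∀ x y, d x y = ⨅ σ : G, ‖x - σ.1 y‖)
    (NN Cd : ℝ) (hCd : 1 ≤ Cd)
    (hdoub : ∀ (x : EuclideanSpace ℝ (Fin N)) (r l : ℝ), 0 < r → 1 ≤ l →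
      Cd⁻¹ * l ^ (N : ℝ) * (ω (ball x r)).toReal ≤ (ω (ball x (l * r))).toReal ∧
      (ω (ball x (l * r))).toReal ≤ Cd * l ^ NN * (ω (ball x r)).toReal)
    (hpos : ∀ (x : EuclideanSpace ℝ (Fin N)) (r : ℝ), 0 < r → 0 < (ω (ball x r)).toReal)
    (hinv : ∀ σ : G, ∀ (x : EuclideanSpace ℝ (Fin N)) (r : ℝ),
      ω (ball (σ.1 x) r) = ω (ball x r)) :
    ∀ ε₁ ε₂ : ℝ, 0 < ε₁ → 0 < ε₂ → ∃ C : ℝ,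
      ∀ t s : ℝ, 0 < t → 0 < s → ∀ x y : EuclideanSpace ℝ (Fin N),
        ∫ z, ((ω (ball x (t + d x z))).toReal)⁻¹ * (t / (t + d x z)) ^ ε₁ *
            (((ω (ball z (s + d z y))).toReal)⁻¹ * (s / (s + d z y)) ^ ε₂) ∂ω ≤
          C / (ω (ball x (max t s + d x y))).toReal := by
  intro ε₁ ε₂ hε₁ hε₂
  obtain ⟨A₁, hA₁, hL1⟩ := Lone hd hdoub hpos hinv hCd hε₁
  obtain ⟨A₂, hA₂, hL2⟩ := Ltwo hd hdoub hpos hinv hCd hε₂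
  have h2NN : (0:ℝ) < (2:ℝ) ^ NN := Real.rpow_pos_of_pos two_pos _
  have h3NN : (0:ℝ) < (3:ℝ) ^ NN := Real.rpow_pos_of_pos (by norm_num) _
  have hCd0 : (0:ℝ) < Cd := by linarith
  set c₂ : ℝ := Cd * 2 ^ NN * (1 + Cd * 3 ^ NN) with hc₂def
  have hc₂ : 0 < c₂ := by positivity
  refine ⟨c₂ * (A₁ + A₂), ?_⟩
  intro t s ht hs x y
  set k₁ : EuclideanSpace ℝ (Fin N) → ℝ :=
    fun z => ((ω (ball x (t + d x z))).toReal)⁻¹ * (t / (t + d x z)) ^ ε₁ with hk₁def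
  set k₂ : EuclideanSpace ℝ (Fin N) → ℝ :=
    fun z => ((ω (ball z (s + d z y))).toReal)⁻¹ * (s / (s + d z y)) ^ ε₂ with hk₂def
  have hdxy : 0 ≤ d x y := d_nonneg hd x y
  have hR : 0 < max t s + d x y := by
    have : 0 < max t s := lt_max_of_lt_left ht
    linarith
  set R : ℝ := max t s + d x y with hRdef
  set vR : ℝ := (ω (ball x R)).toReal with hvRdef
  have hvR : 0 < vR := hpos x R hR
  -- nonnegativity of the kernels
  have hk₁nn : ∀ z, 0 ≤ k₁ z := by
    intro z
    have h0 : 0 ≤ d x z := d_nonneg hd x z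
    exact kernel_nonneg (by positivity) (by positivity) ε₁
  have hk₂nn : ∀ z, 0 ≤ k₂ z := by
    intro z
    have h0 : 0 ≤ d z y := d_nonneg hd z y
    exact kernel_nonneg (by positivity) (by positivity) ε₂
  -- measurability
  have hmk₁ : Measurable k₁ := by
    apply Measurable.mul
    · exact (meas_fixed hd x t).inv
    · have hcont : Continuous fun z => t / (t + d x z) := by
        apply continuous_const.div (continuous_const.add (d_lip hd x))
        intro z
        have := d_nonneg hd x z
        exact (by linarith : (0:ℝ) < t + d x z).ne'
      exact (hcont.rpow_const fun z => Or.inr hε₁.le).measurable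
  have hmk₂ : Measurable k₂ := by
    have hdy : (fun z => d z y) = fun z => d y z := funext fun z => d_symm hd z y
    apply Measurable.mul
    · exact (meas_var hd y hs).inv
    · have hcont : Continuous fun z => s / (s + d z y) := by
        rw [show (fun z => s / (s + d z y)) = fun z => s / (s + d y z) by
          funext z; rw [d_symm hd z y]]
        apply continuous_const.div (continuous_const.add (d_lip hd y))
        intro z
        have := d_nonneg hd y z
        exact (by linarith : (0:ℝ) < s + d y z).ne'
      exact (hcont.rpow_const fun z => Or.inr hε₂.le).measurable
  have hmf : Measurable fun z => k₁ z * k₂ z := hmk₁.mul hmk₂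
  -- pointwise composition bound
  have hpt : ∀ z, ENNReal.ofReal (k₁ z * k₂ z) ≤
      ENNReal.ofReal (c₂ * vR⁻¹) * (ENNReal.ofReal (k₁ z) + ENNReal.ofReal (k₂ z)) := by
    intro z
    rw [← ENNReal.ofReal_add (hk₁nn z) (hk₂nn z),
      ← ENNReal.ofReal_mul (by positivity : (0:ℝ) ≤ c₂ * vR⁻¹)]
    apply ENNReal.ofReal_le_ofReal
    have hdz : 0 ≤ d x z := d_nonneg hd x z
    have hdzy : 0 ≤ d z y := d_nonneg hd z y
    have hr₁ : 0 < t + d x z := by linarith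
    have hr₂ : 0 < s + d z y := by linarith
    have hRr : R ≤ (t + d x z) + (s + d z y) := by
      have h1 : d x y ≤ d x z + d z y := d_tri hd x z y
      have h2 : max t s ≤ t + s := max_le (by linarith) (by linarith)
      rw [hRdef]; linarith
    have hv₁ : 0 < (ω (ball x (t + d x z))).toReal := hpos x _ hr₁
    have hv₂ : 0 < (ω (ball z (s + d z y))).toReal := hpos z _ hr₂
    have hbd₁ : k₁ z ≤ ((ω (ball x (t + d x z))).toReal)⁻¹ := by
      rw [hk₁def]
      have : (t / (t + d x z)) ^ ε₁ ≤ 1 :=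
        Real.rpow_le_one (by positivity) (by rw [div_le_one hr₁]; linarith) hε₁.le
      calc ((ω (ball x (t + d x z))).toReal)⁻¹ * (t / (t + d x z)) ^ ε₁
          ≤ ((ω (ball x (t + d x z))).toReal)⁻¹ * 1 :=
            mul_le_mul_of_nonneg_left this (by positivity)
        _ = ((ω (ball x (t + d x z))).toReal)⁻¹ := mul_one _
    have hbd₂ : k₂ z ≤ ((ω (ball z (s + d z y))).toReal)⁻¹ := by
      rw [hk₂def]
      have : (s / (s + d z y)) ^ ε₂ ≤ 1 :=
        Real.rpow_le_one (by positivity) (by rw [div_le_one hr₂]; linarith) hε₂.le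
      calc ((ω (ball z (s + d z y))).toReal)⁻¹ * (s / (s + d z y)) ^ ε₂
          ≤ ((ω (ball z (s + d z y))).toReal)⁻¹ * 1 :=
            mul_le_mul_of_nonneg_left this (by positivity)
        _ = ((ω (ball z (s + d z y))).toReal)⁻¹ := mul_one _
    rcases le_total (s + d z y) (t + d x z) with hcase | hcase
    · -- r₂ ≤ r₁ : use ball at x with radius r₁
      have hR2 : R ≤ 2 * (t + d x z) := by linarith
      have hv : vR ≤ Cd * 2 ^ NN * (ω (ball x (t + d x z))).toReal := by
        have hm : vR ≤ (ω (ball x (2 * (t + d x z)))).toReal := by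
          rw [hvRdef]; exact vmono hpos x hR hR2
        have hdb := vdoub hdoub x hr₁ (show t + d x z ≤ 2 * (t + d x z) by linarith)
        rw [show (2 * (t + d x z)) / (t + d x z) = (2:ℝ) by field_simp] at hdb
        linarith
      have hinv₁ : ((ω (ball x (t + d x z))).toReal)⁻¹ ≤ c₂ * vR⁻¹ := by
        have h1 : (1:ℝ) / (ω (ball x (t + d x z))).toReal ≤ c₂ / vR := by
          rw [div_le_div_iff₀ hv₁ hvR, hc₂def]
          nlinarith [hv, mul_pos (mul_pos hCd0 h2NN) (mul_pos (mul_pos hCd0 h3NN) hv₁)]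
        simpa [one_div, div_eq_mul_inv] using h1
      calc k₁ z * k₂ z ≤ ((ω (ball x (t + d x z))).toReal)⁻¹ * k₂ z :=
            mul_le_mul_of_nonneg_right hbd₁ (hk₂nn z)
        _ ≤ (c₂ * vR⁻¹) * k₂ z := mul_le_mul_of_nonneg_right hinv₁ (hk₂nn z)
        _ ≤ (c₂ * vR⁻¹) * (k₁ z + k₂ z) := by
            apply mul_le_mul_of_nonneg_left _ (by positivity)
            linarith [hk₁nn z]
    · -- r₁ ≤ r₂ : use ball at z with radius r₂, recentre
      have hR2 : R ≤ 2 * (s + d z y) := by linarith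
      have hv : vR ≤ Cd * 2 ^ NN * (Cd * 3 ^ NN * (ω (ball z (s + d z y))).toReal) := by
        have hm : vR ≤ (ω (ball x (2 * (s + d z y)))).toReal := by
          rw [hvRdef]; exact vmono hpos x hR hR2
        have hdb := vdoub hdoub x hr₂ (show s + d z y ≤ 2 * (s + d z y) by linarith)
        rw [show (2 * (s + d z y)) / (s + d z y) = (2:ℝ) by field_simp] at hdb
        have hcent : (ω (ball x (s + d z y))).toReal ≤
            Cd * 3 ^ NN * (ω (ball z (s + d z y))).toReal :=
          vcenter hd hdoub hpos hinv x z hr₂ (by linarith)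
        have := mul_le_mul_of_nonneg_left hcent (le_of_lt (mul_pos hCd0 h2NN))
        linarith
      have hinv₂ : ((ω (ball z (s + d z y))).toReal)⁻¹ ≤ c₂ * vR⁻¹ := by
        have h1 : (1:ℝ) / (ω (ball z (s + d z y))).toReal ≤ c₂ / vR := by
          rw [div_le_div_iff₀ hv₂ hvR, hc₂def]
          nlinarith [hv, mul_pos (mul_pos hCd0 h2NN) hv₂]
        simpa [one_div, div_eq_mul_inv] using h1
      calc k₁ z * k₂ z ≤ k₁ z * ((ω (ball z (s + d z y))).toReal)⁻¹ :=
            mul_le_mul_of_nonneg_left hbd₂ (hk₁nn z)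
        _ ≤ k₁ z * (c₂ * vR⁻¹) := mul_le_mul_of_nonneg_left hinv₂ (hk₁nn z)
        _ ≤ (c₂ * vR⁻¹) * (k₁ z + k₂ z) := by
            rw [mul_comm]
            apply mul_le_mul_of_nonneg_left _ (by positivity)
            linarith [hk₂nn z]
  -- pass to the lintegral
  have hlint : (∫⁻ z, ENNReal.ofReal (k₁ z * k₂ z) ∂ω) ≤
      ENNReal.ofReal (c₂ * vR⁻¹ * (A₁ + A₂)) := by
    calc (∫⁻ z, ENNReal.ofReal (k₁ z * k₂ z) ∂ω)
        ≤ ∫⁻ z, ENNReal.ofReal (c₂ * vR⁻¹) *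
            (ENNReal.ofReal (k₁ z) + ENNReal.ofReal (k₂ z)) ∂ω := lintegral_mono hpt
      _ = ENNReal.ofReal (c₂ * vR⁻¹) *
          ∫⁻ z, (ENNReal.ofReal (k₁ z) + ENNReal.ofReal (k₂ z)) ∂ω :=
          lintegral_const_mul' _ _ ENNReal.ofReal_ne_top
      _ = ENNReal.ofReal (c₂ * vR⁻¹) *
          ((∫⁻ z, ENNReal.ofReal (k₁ z) ∂ω) + ∫⁻ z, ENNReal.ofReal (k₂ z) ∂ω) := by
          rw [lintegral_add_left (show Measurable fun z => ENNReal.ofReal (k₁ z) from ENNReal.measurable_ofReal.comp hmk₁)]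
      _ ≤ ENNReal.ofReal (c₂ * vR⁻¹) * (ENNReal.ofReal A₁ + ENNReal.ofReal A₂) := by
          apply mul_le_mul_right
          exact add_le_add (hL1 x t ht) (hL2 y s hs)
      _ = ENNReal.ofReal (c₂ * vR⁻¹ * (A₁ + A₂)) := by
          rw [← ENNReal.ofReal_add hA₁ hA₂, ← ENNReal.ofReal_mul (by positivity)]
  -- back to the Bochner integral
  have heq : (∫ z, k₁ z * k₂ z ∂ω) = (∫⁻ z, ENNReal.ofReal (k₁ z * k₂ z) ∂ω).toReal := by
    rw [integral_eq_lintegral_of_nonneg_ae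
      (Filter.Eventually.of_forall fun z => mul_nonneg (hk₁nn z) (hk₂nn z))
      hmf.aestronglyMeasurable]
  rw [heq]
  calc (∫⁻ z, ENNReal.ofReal (k₁ z * k₂ z) ∂ω).toReal
      ≤ (ENNReal.ofReal (c₂ * vR⁻¹ * (A₁ + A₂))).toReal :=
        ENNReal.toReal_mono ENNReal.ofReal_ne_top hlint
    _ = c₂ * vR⁻¹ * (A₁ + A₂) := ENNReal.toReal_ofReal (by positivity)
    _ = c₂ * (A₁ + A₂) / vR := by rw [div_eq_mul_inv]; ring
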